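/- arXiv:2404.09766 — 2 statements merged into one kernel-verified Lean document; each statement's English description precedes it below -/
import Mathlib

section
/- Let A be a nonzero symmetric real m×m matrix. The space of vectors ξ ∈ ℝ^m satisfying A_{λμ} ξ_ν = A_{λν} ξ_μ for all indices λ, μ, ν has dimension 1 if rank A = 1, and dimension 0 if rank A ≥ 2. -/
/-!
The equations say that `ξ` is proportional to every row of `A` (all `2 × 2` minors of the pair
`(A l, ξ)` vanish). So a nonzero solution spans a line containing the whole row space, which forces
`rank A ≤ 1`; and when `rank A = 1` the solutions are exactly the multiples of a nonzero row.
-/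

open Submodule

/-- The space of solutions `ξ` of `A_{λμ} ξ_ν = A_{λν} ξ_μ`. -/
def solSpace {m : ℕ} (A : Matrix (Fin m) (Fin m) ℝ) : Submodule ℝ (Fin m → ℝ) where
  carrier := {ξ | ∀ l p q : Fin m, A l p * ξ q = A l q * ξ p}
  zero_mem' := by intro l p q; simp
  add_mem' := by
    intro a b ha hb l p q
    simp only [Pi.add_apply, mul_add, ha l p q, hb l p q]
  smul_mem' := by
    intro c a ha l p q
    simp only [Pi.smul_apply, smul_eq_mul]
    rw [mul_left_comm, ha l p q, mul_left_comm]

section Proportional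

variable {K ι : Type*} [Field K] {ξ η : ι → K}

theorem mem_span_singleton_of_mul_eq_mul (hξ : ξ ≠ 0) (h : ∀ p q, ξ p * η q = ξ q * η p) :
    η ∈ K ∙ ξ := by
  obtain ⟨q, hq⟩ := Function.ne_iff.mp hξ
  refine mem_span_singleton.mpr ⟨η q / ξ q, funext fun p => ?_⟩
  simp only [Pi.smul_apply, smul_eq_mul, Pi.zero_apply] at hq ⊢
  rw [div_mul_eq_mul_div, div_eq_iff hq]
  linear_combination h p q

theorem mul_eq_mul_of_mem_span_singleton (h : η ∈ K ∙ ξ) (p q : ι) :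
    ξ p * η q = ξ q * η p := by
  obtain ⟨c, rfl⟩ := mem_span_singleton.mp h
  simp only [Pi.smul_apply, smul_eq_mul]
  ring

end Proportional

section SolSpace

variable {m : ℕ} {A : Matrix (Fin m) (Fin m) ℝ} {ξ : Fin m → ℝ}

theorem mem_solSpace_iff :
    ξ ∈ solSpace A ↔ ξ = 0 ∨ span ℝ (Set.range A.row) ≤ ℝ ∙ ξ := by
  constructor
  · intro hξ
    refine or_iff_not_imp_left.mpr fun hξ0 => span_le.mpr ?_
    rintro _ ⟨l, rfl⟩
    exact mem_span_singleton_of_mul_eq_mul (η := A l) hξ0 fun p q => by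
      linear_combination hξ l q p
  · rintro (rfl | hle)
    · exact zero_mem _
    intro l p q
    have hl : A l ∈ ℝ ∙ ξ := hle (subset_span ⟨l, rfl⟩)
    linear_combination mul_eq_mul_of_mem_span_singleton hl q p

theorem solSpace_eq_bot_of_two_le_rank (hA : 2 ≤ A.rank) : solSpace A = ⊥ := by
  refine eq_bot_iff.mpr fun ξ hξ => (mem_solSpace_iff.mp hξ).resolve_right fun hle => ?_
  have : A.rank ≤ 1 := by
    rw [A.rank_eq_finrank_span_row]
    simpa using (finrank_mono hle).trans (finrank_span_le_card {ξ})
  omega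

theorem solSpace_eq_span_row_of_rank_eq_one (hA : A.rank = 1) {l : Fin m} (hl : A l ≠ 0) :
    solSpace A = ℝ ∙ A l := by
  have hrow : ℝ ∙ A l = span ℝ (Set.range A.row) :=
    eq_of_le_of_finrank_eq (span_singleton_le_iff_mem _ _ |>.mpr (subset_span ⟨l, rfl⟩))
      (by rw [finrank_span_singleton hl, ← A.rank_eq_finrank_span_row, hA])
  refine le_antisymm (fun η hη => mem_span_singleton_of_mul_eq_mul hl (hη l)) ?_
  exact (span_singleton_le_iff_mem _ _).mpr (mem_solSpace_iff.mpr (.inr hrow.ge))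

end SolSpace

theorem stmt_3_general (m : ℕ) (A : Matrix (Fin m) (Fin m) ℝ) :
    (A.rank = 1 → Module.finrank ℝ (solSpace A) = 1) ∧
    (2 ≤ A.rank → Module.finrank ℝ (solSpace A) = 0) := by
  refine ⟨fun hA => ?_, fun hA => by rw [solSpace_eq_bot_of_two_le_rank hA, finrank_bot]⟩
  obtain ⟨l, hl⟩ : ∃ l, A l ≠ 0 := by
    by_contra! h
    simp [show A = 0 from funext h] at hA
  rw [solSpace_eq_span_row_of_rank_eq_one hA hl, finrank_span_singleton hl]

theorem stmt_3 (m : ℕ) (A : Matrix (Fin m) (Fin m) ℝ)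
    (hA : A ≠ 0) (hsymm : A.IsSymm) :
    (A.rank = 1 → Module.finrank ℝ (solSpace A) = 1) ∧
    (2 ≤ A.rank → Module.finrank ℝ (solSpace A) = 0) :=
  stmt_3_general m A
end

section
/- With the notation of the previous setup (n ≥ 4, A a nonzero symmetric (n−2)×(n−2) matrix, ζ_λ = a_{λμ} dx^μ ∧ dx¹), the space of covectors ξ ∈ (ℝⁿ)* with ζ_λ ∧ ξ = 0 for all λ has dimension 1 if rank A ≥ 2, and dimension 2 if rank A = 1. In the first case it is spanned by dx¹. -/
open ExteriorAlgebra

/-- The coordinate covector `dx^i` on `ℝⁿ`. -/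
def dx {n : ℕ} (i : Fin n) : Module.Dual ℝ (Fin n → ℝ) := LinearMap.proj i

/-- Embedding of the middle indices `2,…,n-1` (0-based: `1,…,n-2`) into `Fin n`. -/
def mid {n : ℕ} (l : Fin (n - 2)) : Fin n := ⟨l.val + 1, by omega⟩

/-- The 2-form `ζ_λ = Σ_μ a_{λμ} dx^μ ∧ dx¹`. -/
noncomputable def zeta {n : ℕ} (A : Matrix (Fin (n - 2)) (Fin (n - 2)) ℝ) (hn : 4 ≤ n)
    (l : Fin (n - 2)) : ExteriorAlgebra ℝ (Module.Dual ℝ (Fin n → ℝ)) :=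
  ∑ p : Fin (n - 2), A l p • (ι ℝ (dx (mid p)) * ι ℝ (dx (⟨0, by omega⟩ : Fin n)))

/-- The space of covectors `ξ` with `ζ_λ ∧ ξ = 0` for all `λ`. -/
noncomputable def solD {n : ℕ} (A : Matrix (Fin (n - 2)) (Fin (n - 2)) ℝ) (hn : 4 ≤ n) :
    Submodule ℝ (Module.Dual ℝ (Fin n → ℝ)) where
  carrier := {ξ | ∀ l : Fin (n - 2), zeta A hn l * ι ℝ ξ = 0}
  zero_mem' := by intro l; simp
  add_mem' := by
    intro a b ha hb l
    simp [map_add, mul_add, ha l, hb l]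
  smul_mem' := by
    intro c a ha l
    simp [map_smul, mul_smul_comm, ha l]

/-!
Write `ρ w = Σ_μ w_μ dx^μ` (`rowForm`), so that `ζ_λ = ρ(a_λ) ∧ dx¹`; `ρ` is injective and `dx¹`
is not in its image. Over a field, `x ∧ y ∧ ξ = 0` with `x, y` independent iff `ξ ∈ span {x, y}`,
so every nonzero row `a_λ` forces `ξ ∈ span {ρ(a_λ), dx¹}`. Two independent rows (rank `A ≥ 2`)
cut this down to `span {dx¹}`. If rank `A = 1`, every `ζ_λ` is a multiple of one `ζ_λ₀ ≠ 0`, and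
the solution space is exactly `span {ρ(a_λ₀), dx¹}`.
-/

open Module Submodule

namespace ExteriorAlgebra

variable {K E : Type*} [Field K] [AddCommGroup E] [Module K E]

theorem ιMulti_eq_zero_iff {k : ℕ} (v : Fin k → E) :
    ιMulti K k v = 0 ↔ ¬LinearIndependent K v := by
  refine ⟨fun h hv => ?_, (ιMulti K k).map_linearDependent v⟩
  -- the products of `k` members of an independent family are independent, and for `s = univ`
  -- that product is `ιMulti v` itself
  let s : Set.powersetCard (Fin k) k := Set.powersetCard.ofCard (s := Finset.univ) (by simp)
  refine (exteriorPower.ιMulti_family_linearIndependent_field k hv).ne_zero s ?_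
  have hid : ⇑(Set.powersetCard.ofFinEmbEquiv.symm s) = id :=
    (Set.powersetCard.ofFinEmbEquiv.symm s).strictMono.eq_id
  ext1
  simp [exteriorPower.ιMulti_family, hid, h]

theorem ι_mul_ιMulti_eq_zero_iff {k : ℕ} {v : Fin k → E} (hv : LinearIndependent K v) (x : E) :
    ι K x * ιMulti K k v = 0 ↔ x ∈ Submodule.span K (Set.range v) := by
  have hcons : ι K x * ιMulti K k v = ιMulti K (k + 1) (Fin.cons x v) := by
    rw [ιMulti_succ_apply]; rfl
  rw [hcons, ιMulti_eq_zero_iff, linearIndependent_finCons]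
  tauto

theorem ι_mul_ι_mul_ι_eq_zero_iff {x y z : E} (hyz : LinearIndependent K ![y, z]) :
    ι K y * ι K z * ι K x = 0 ↔ x ∈ Submodule.span K {y, z} := by
  have hy : ι K y * ι K x = -(ι K x * ι K y) := eq_neg_of_add_eq_zero_left (ι_add_mul_swap y x)
  have hz : ι K z * ι K x = -(ι K x * ι K z) := eq_neg_of_add_eq_zero_left (ι_add_mul_swap z x)
  have hrot : ι K y * ι K z * ι K x = ι K x * ιMulti K 2 ![y, z] := by
    rw [mul_assoc, hz, mul_neg, ← mul_assoc, hy, neg_mul, neg_neg, mul_assoc]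
    simp [ιMulti_apply]
  rw [hrot, ι_mul_ιMulti_eq_zero_iff hyz, Matrix.range_cons_cons_empty]

theorem ι_mul_ι_mul_ι_self (x y : E) : ι K x * ι K y * ι K x = 0 := by
  rw [mul_assoc, eq_neg_of_add_eq_zero_left (ι_add_mul_swap y x), mul_neg, ← mul_assoc, ι_sq_zero,
    zero_mul, neg_zero]

end ExteriorAlgebra

section LinearAlgebra

variable {K V W : Type*} [Field K] [AddCommGroup V] [Module K V] [AddCommGroup W] [Module K W]

theorem LinearIndependent.snoc_map_of_notMem_range {k : ℕ} {v : Fin k → W}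
    (hv : LinearIndependent K v) {ρ : W →ₗ[K] V} (hρ : Function.Injective ρ) {e : V}
    (he : e ∉ LinearMap.range ρ) : LinearIndependent K (Fin.snoc (ρ ∘ v) e : Fin (k + 1) → V) := by
  refine linearIndependent_finSnoc.2 ⟨hv.map' ρ (LinearMap.ker_eq_bot.2 hρ), fun h => he ?_⟩
  refine span_le.2 ?_ h
  rintro _ ⟨i, rfl⟩
  exact ⟨v i, rfl⟩

theorem mem_span_singleton_of_mem_span_pair_of_mem_span_pair {a b e ξ : V}
    (habe : LinearIndependent K ![a, b, e]) (ha : ξ ∈ span K {a, e}) (hb : ξ ∈ span K {b, e}) :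
    ξ ∈ K ∙ e := by
  obtain ⟨s, t, rfl⟩ := mem_span_pair.1 ha
  obtain ⟨s', t', h⟩ := mem_span_pair.1 hb
  have hs : s = 0 := by
    have := Fintype.linearIndependent_iff.1 habe ![s, -s', t - t']
      (by
        simp only [Fin.sum_univ_three, Matrix.cons_val_zero, Matrix.cons_val_one, Matrix.cons_val,
          neg_smul]
        linear_combination (norm := module) (-1 : K) • h)
    exact this 0
  simpa [hs] using smul_mem _ t (mem_span_singleton_self e)

theorem exists_ne_zero_of_finrank_span_range_ne_zero {ι : Type*} {r : ι → W}
    (h : finrank K (span K (Set.range r)) ≠ 0) : ∃ i, r i ≠ 0 := by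
  by_contra! hr
  have hbot : span K (Set.range r) = ⊥ := span_eq_bot.2 (by rintro _ ⟨i, rfl⟩; exact hr i)
  exact h (by rw [hbot, finrank_bot])

theorem exists_linearIndependent_pair_of_two_le_finrank {ι : Type*} {r : ι → W}
    (h : 2 ≤ finrank K (span K (Set.range r))) : ∃ i j, LinearIndependent K ![r i, r j] := by
  obtain ⟨i, hi⟩ := exists_ne_zero_of_finrank_span_range_ne_zero (K := K) (r := r) (by omega)
  by_contra! hdep
  have hle : span K (Set.range r) ≤ K ∙ r i := by
    refine span_le.2 ?_
    rintro _ ⟨j, rfl⟩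
    obtain ⟨a, ha⟩ := not_forall_not.1 ((LinearIndependent.pair_iff' hi).not.1 (hdep i j))
    exact mem_span_singleton.2 ⟨a, ha⟩
  have := (finrank_mono hle).trans (finrank_span_singleton hi).le
  omega

theorem exists_ne_zero_forall_mem_span_singleton {ι : Type*} {r : ι → W}
    (h : finrank K (span K (Set.range r)) = 1) : ∃ i, r i ≠ 0 ∧ ∀ j, r j ∈ K ∙ r i := by
  obtain ⟨i, hi⟩ := exists_ne_zero_of_finrank_span_range_ne_zero (K := K) (r := r) (by omega)
  have := Module.finite_of_finrank_eq_succ h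
  have heq : K ∙ r i = span K (Set.range r) :=
    eq_of_le_of_finrank_le (span_mono (by simp)) (by rw [h, finrank_span_singleton hi])
  exact ⟨i, hi, fun j => heq ▸ subset_span ⟨j, rfl⟩⟩

end LinearAlgebra

noncomputable def rowForm (n : ℕ) : (Fin (n - 2) → ℝ) →ₗ[ℝ] Module.Dual ℝ (Fin n → ℝ) :=
  Fintype.linearCombination ℝ fun p => dx (mid p)

theorem mid_injective (n : ℕ) : Function.Injective (mid (n := n)) := fun p q h => by
  simpa [mid, Fin.ext_iff] using h

theorem rowForm_apply_single_mid {n : ℕ} (w : Fin (n - 2) → ℝ) (q : Fin (n - 2)) :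
    rowForm n w (Pi.single (mid q) 1) = w q := by
  simp [rowForm, Fintype.linearCombination_apply, dx, Pi.single_apply, (mid_injective n).eq_iff]

theorem rowForm_apply_single_zero {n : ℕ} (h : 0 < n) (w : Fin (n - 2) → ℝ) :
    rowForm n w (Pi.single ⟨0, h⟩ 1) = 0 := by
  simp [rowForm, Fintype.linearCombination_apply, dx, mid, Fin.ext_iff]

theorem rowForm_injective (n : ℕ) : Function.Injective (rowForm n) := fun v w h => by
  funext q
  rw [← rowForm_apply_single_mid v q, h, rowForm_apply_single_mid]

theorem dx_zero_notMem_range_rowForm {n : ℕ} (h : 0 < n) :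
    dx (⟨0, h⟩ : Fin n) ∉ LinearMap.range (rowForm n) := by
  rintro ⟨w, hw⟩
  have := rowForm_apply_single_zero h w
  rw [hw] at this
  simp [dx] at this

theorem linearIndependent_snoc_rowForm_dx_zero {n : ℕ} (h : 0 < n) {k : ℕ}
    {v : Fin k → Fin (n - 2) → ℝ} (hv : LinearIndependent ℝ v) :
    LinearIndependent ℝ (Fin.snoc (rowForm n ∘ v) (dx (⟨0, h⟩ : Fin n)) : Fin (k + 1) → _) :=
  hv.snoc_map_of_notMem_range (rowForm_injective n) (dx_zero_notMem_range_rowForm h)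

theorem linearIndependent_rowForm_dx_zero {n : ℕ} (h : 0 < n) {w : Fin (n - 2) → ℝ}
    (hw : w ≠ 0) : LinearIndependent ℝ ![rowForm n w, dx (⟨0, h⟩ : Fin n)] := by
  convert linearIndependent_snoc_rowForm_dx_zero h (v := ![w]) (linearIndependent_unique_iff.2 hw)
    using 1
  funext i; fin_cases i <;> rfl

theorem zeta_eq {n : ℕ} (A : Matrix (Fin (n - 2)) (Fin (n - 2)) ℝ) (hn : 4 ≤ n)
    (l : Fin (n - 2)) :
    zeta A hn l = ι ℝ (rowForm n (A l)) * ι ℝ (dx (⟨0, by omega⟩ : Fin n)) := by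
  simp [zeta, rowForm, Fintype.linearCombination_apply, Finset.sum_mul]

theorem dx_zero_mem_solD {n : ℕ} (A : Matrix (Fin (n - 2)) (Fin (n - 2)) ℝ) (hn : 4 ≤ n) :
    dx (⟨0, by omega⟩ : Fin n) ∈ solD A hn := fun l => by
  rw [zeta_eq, mul_assoc, ι_sq_zero, mul_zero]

theorem mem_span_pair_of_mem_solD {n : ℕ} {A : Matrix (Fin (n - 2)) (Fin (n - 2)) ℝ} {hn : 4 ≤ n}
    {ξ : Module.Dual ℝ (Fin n → ℝ)} (hξ : ξ ∈ solD A hn) {l : Fin (n - 2)} (hl : A l ≠ 0) :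
    ξ ∈ span ℝ {rowForm n (A l), dx (⟨0, by omega⟩ : Fin n)} := by
  have := hξ l
  rwa [zeta_eq, ι_mul_ι_mul_ι_eq_zero_iff (linearIndependent_rowForm_dx_zero _ hl)] at this

theorem rowForm_mem_solD {n : ℕ} {A : Matrix (Fin (n - 2)) (Fin (n - 2)) ℝ} (hn : 4 ≤ n)
    {w : Fin (n - 2) → ℝ} (hw : ∀ l, A l ∈ ℝ ∙ w) : rowForm n w ∈ solD A hn := fun l => by
  obtain ⟨c, hc⟩ := mem_span_singleton.1 (hw l)
  rw [zeta_eq, ← hc, map_smul, map_smul, smul_mul_assoc, smul_mul_assoc, ι_mul_ι_mul_ι_self,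
    smul_zero]

theorem solD_eq_span_dx_zero {n : ℕ} {A : Matrix (Fin (n - 2)) (Fin (n - 2)) ℝ} (hn : 4 ≤ n)
    (hr : 2 ≤ A.rank) : solD A hn = ℝ ∙ dx (⟨0, by omega⟩ : Fin n) := by
  rw [Matrix.rank_eq_finrank_span_row] at hr
  obtain ⟨i, j, hij⟩ := exists_linearIndependent_pair_of_two_le_finrank hr
  have hind : LinearIndependent ℝ
      ![rowForm n (A i), rowForm n (A j), dx (⟨0, by omega⟩ : Fin n)] := by
    convert linearIndependent_snoc_rowForm_dx_zero (by omega : 0 < n) hij using 1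
    funext k; fin_cases k <;> rfl
  refine le_antisymm (fun ξ hξ => ?_) (span_singleton_le_iff_mem _ _ |>.2 (dx_zero_mem_solD A hn))
  exact mem_span_singleton_of_mem_span_pair_of_mem_span_pair hind
    (mem_span_pair_of_mem_solD hξ (hij.ne_zero 0)) (mem_span_pair_of_mem_solD hξ (hij.ne_zero 1))

theorem finrank_solD_of_rank_eq_one {n : ℕ} {A : Matrix (Fin (n - 2)) (Fin (n - 2)) ℝ}
    (hn : 4 ≤ n) (hr : A.rank = 1) : finrank ℝ (solD A hn) = 2 := by
  rw [Matrix.rank_eq_finrank_span_row] at hr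
  obtain ⟨i, hi, hrow⟩ := exists_ne_zero_forall_mem_span_singleton hr
  have hsol : solD A hn = span ℝ {rowForm n (A i), dx (⟨0, by omega⟩ : Fin n)} := by
    refine le_antisymm (fun ξ hξ => mem_span_pair_of_mem_solD hξ hi) (span_le.2 ?_)
    rw [Set.insert_subset_iff, Set.singleton_subset_iff]
    exact ⟨rowForm_mem_solD hn hrow, dx_zero_mem_solD A hn⟩
  rw [hsol, ← Matrix.range_cons_cons_empty _ _ ![],
    finrank_span_eq_card (linearIndependent_rowForm_dx_zero (w := A i) _ hi), Fintype.card_fin]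

theorem dx_ne_zero {n : ℕ} (i : Fin n) : dx i ≠ 0 := fun h => by
  simpa [dx] using LinearMap.congr_fun h (Pi.single i 1)

theorem stmt_9 (n : ℕ) (hn : 4 ≤ n)
    (A : Matrix (Fin (n - 2)) (Fin (n - 2)) ℝ) :
    (2 ≤ A.rank →
      Module.finrank ℝ (solD A hn) = 1 ∧
        solD A hn = Submodule.span ℝ {dx (⟨0, by omega⟩ : Fin n)}) ∧
    (A.rank = 1 → Module.finrank ℝ (solD A hn) = 2) := by
  refine ⟨fun hr => ?_, finrank_solD_of_rank_eq_one hn⟩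
  have hsol := solD_eq_span_dx_zero hn hr
  exact ⟨by rw [hsol, finrank_span_singleton (dx_ne_zero _)], hsol⟩
end
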